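/- Let n ≥ 2. Assume T : S^n_+ → S^n_+ is a surjective map that is 1-Lipschitz with respect to the geodesic distance, and assume T(C) = C, where C = S^n_+ ∩ {x_{n+1} = 0} is the equator. Then T(N) = N and there exists an n×n orthogonal matrix A such that T((z, x_{n+1})) = (Az, x_{n+1}) for every (z, x_{n+1}) ∈ S^n_+ with z ∈ R^n; in particular T is an isometry of S^n_+ fixing the north pole N. -/

import Mathlib

open MeasureTheory Real

noncomputable section

/-- Euclidean space `ℝ^{n+1}`. -/
abbrev Euc (n : ℕ) := EuclideanSpace ℝ (Fin (n + 1))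

/-- The unit sphere `S^n ⊆ ℝ^{n+1}`. -/
def unitSphere (n : ℕ) : Set (Euc n) := Metric.sphere 0 1

/-- The closed upper half-sphere `S^n_+`. -/
def upperHemi (n : ℕ) : Set (Euc n) := {x ∈ unitSphere n | 0 ≤ x (Fin.last n)}

/-- The equator `C = S^n_+ ∩ {x_{n+1} = 0}`. -/
def equator (n : ℕ) : Set (Euc n) := {x ∈ upperHemi n | x (Fin.last n) = 0}

/-- The geodesic distance on the sphere: `d(x,y) = arccos (x ⬝ y)`. -/
def geod {n : ℕ} (x y : Euc n) : ℝ := Real.arccos (inner ℝ x y)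

/-- The north pole `N = (0,…,0,1)`. -/
def northPole (n : ℕ) : Euc n := EuclideanSpace.single (Fin.last n) 1

/-- The uniform probability measure `σ_+` on the upper half-sphere, i.e. the normalized
restriction to `S^n_+` of the `n`-dimensional Hausdorff measure. -/
def sigmaPlus (n : ℕ) : Measure (Euc n) :=
  ((μH[n] : Measure (Euc n)) (upperHemi n))⁻¹ • (μH[n] : Measure (Euc n)).restrict (upperHemi n)

/-!
On the unit sphere `geod` is an increasing function of the chordal distance, so `T` is a
surjective `1`-Lipschitz self-map of the compact metric space `S^n_+`, hence an isometry, and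
it preserves inner products on `S^n_+`. As `T` maps the equator onto itself, `T N` is orthogonal
to the whole equator, which forces `T N = N`; then `x_{n+1} = ⟪x, N⟫` is preserved as well.
A map preserving inner products on a set containing an orthonormal basis `(e_k)` acts there as
`x ↦ ∑ x_k • T e_k`, and the images `T e_1, …, T e_n` are orthonormal vectors of the equatorial
hyperplane: they are the columns of the orthogonal matrix `A`.
-/

open Function
open scoped RealInnerProductSpace

theorem CompactSpace.exists_lt_dist_lt {X : Type*} [PseudoMetricSpace X] [CompactSpace X]
    (u : ℕ → X) {ε : ℝ} (hε : 0 < ε) : ∃ i j, i < j ∧ dist (u j) (u i) < ε := by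
  obtain ⟨_, φ, hφ, hlim⟩ := CompactSpace.tendsto_subseq u
  obtain ⟨N, hN⟩ := Metric.cauchySeq_iff'.mp hlim.cauchySeq ε hε
  exact ⟨φ N, φ (N + 1), hφ N.lt_succ_self, hN (N + 1) N.le_succ⟩

/-- The backward orbit of `(x, y)` under a right inverse of `f` returns close to `(x, y)`;
pushing the returning points forward shows that `f` shrinks no distance. -/
theorem LipschitzWith.isometry_of_surjective {X : Type*} [PseudoMetricSpace X] [CompactSpace X]
    {f : X → X} (hf : LipschitzWith 1 f) (hsurj : Surjective f) : Isometry f := by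
  have hf_iter (k : ℕ) (x y : X) : dist (f^[k] x) (f^[k] y) ≤ dist x y := by
    simpa using (hf.iterate k).dist_le_mul x y
  set g := surjInv hsurj
  have hfg (k : ℕ) : RightInverse g^[k] f^[k] := (rightInverse_surjInv hsurj).iterate k
  refine Isometry.of_dist_eq fun x y => le_antisymm (by simpa using hf.dist_le_mul x y) ?_
  refine le_of_forall_pos_le_add fun ε hε => ?_
  obtain ⟨i, j, hij, hclose⟩ :=
    CompactSpace.exists_lt_dist_lt (fun k => (g^[k] x, g^[k] y)) (half_pos hε)
  obtain ⟨m, rfl⟩ := Nat.exists_eq_add_of_lt hij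
  rw [Prod.dist_eq, max_lt_iff] at hclose
  have hreturn (z : X) (hz : dist (g^[i + m + 1] z) (g^[i] z) < ε / 2) :
      dist (g^[m + 1] z) z < ε / 2 :=
    calc dist (g^[m + 1] z) z = dist (f^[i] (g^[i + m + 1] z)) (f^[i] (g^[i] z)) := by
          rw [add_assoc, iterate_add_apply g i, hfg i, hfg i]
      _ ≤ dist (g^[i + m + 1] z) (g^[i] z) := hf_iter i _ _
      _ < ε / 2 := hz
  have hx := hreturn x hclose.1
  have hy := hreturn y hclose.2
  set u := g^[m + 1] x
  set v := g^[m + 1] y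
  calc dist x y = dist (f^[m] (f u)) (f^[m] (f v)) := by
        rw [← iterate_succ_apply, ← iterate_succ_apply, hfg, hfg]
    _ ≤ dist (f u) (f v) := hf_iter m _ _
    _ ≤ dist (f u) (f x) + dist (f x) (f y) + dist (f y) (f v) := dist_triangle4 _ _ _ _
    _ ≤ dist u x + dist (f x) (f y) + dist y v := by
        gcongr <;> simpa using hf.dist_le_mul _ _
    _ ≤ dist (f x) (f y) + ε := by rw [dist_comm y v]; linarith

section InnerProductSpace

variable {E F : Type*} [NormedAddCommGroup E] [InnerProductSpace ℝ E]
  [NormedAddCommGroup F] [InnerProductSpace ℝ F]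

theorem dist_le_dist_iff_inner_le_inner {x y x' y' : E} (hx : ‖x‖ = 1) (hy : ‖y‖ = 1)
    (hx' : ‖x'‖ = 1) (hy' : ‖y'‖ = 1) : dist x y ≤ dist x' y' ↔ ⟪x', y'⟫ ≤ ⟪x, y⟫ := by
  rw [dist_eq_norm, dist_eq_norm, ← sq_le_sq₀ (norm_nonneg _) (norm_nonneg _),
    norm_sub_sq_real, norm_sub_sq_real, hx, hy, hx', hy']
  constructor <;> intro h <;> linarith

theorem dist_eq_dist_iff_inner_eq_inner {x y x' y' : E} (hx : ‖x‖ = 1) (hy : ‖y‖ = 1)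
    (hx' : ‖x'‖ = 1) (hy' : ‖y'‖ = 1) : dist x y = dist x' y' ↔ ⟪x, y⟫ = ⟪x', y'⟫ := by
  rw [le_antisymm_iff, le_antisymm_iff, dist_le_dist_iff_inner_le_inner hx hy hx' hy',
    dist_le_dist_iff_inner_le_inner hx' hy' hx hy, and_comm]

theorem map_sum_smul_eq_of_inner_map_map {S : Set E} {f : E → F}
    (hf : ∀ x ∈ S, ∀ y ∈ S, ⟪f x, f y⟫ = ⟪x, y⟫) {ι : Type*} [Fintype ι] {v : ι → E}
    (hv : ∀ i, v i ∈ S) (c : ι → ℝ) (hS : ∑ i, c i • v i ∈ S) :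
    f (∑ i, c i • v i) = ∑ i, c i • f (v i) := by
  set w := f (∑ i, c i • v i) - ∑ i, c i • f (v i)
  have horth : ∀ y ∈ S, ⟪w, f y⟫ = 0 := fun y hy => by
    simp only [w, inner_sub_left, sum_inner, real_inner_smul_left, hf _ hS _ hy,
      hf _ (hv _) _ hy, sub_self]
  have hw : ⟪w, w⟫ = 0 := by
    simp only [w, inner_sub_right (𝕜 := ℝ) w, inner_sum, real_inner_smul_right, horth _ hS,
      horth _ (hv _), mul_zero, Finset.sum_const_zero, sub_zero]
  exact sub_eq_zero.mp (inner_self_eq_zero.mp hw)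

end InnerProductSpace

section Hemisphere

variable {n : ℕ}

theorem norm_eq_one_of_mem_upperHemi {x : Euc n} (hx : x ∈ upperHemi n) : ‖x‖ = 1 :=
  mem_sphere_zero_iff_norm.mp hx.1

theorem isCompact_upperHemi : IsCompact (upperHemi n) :=
  (isCompact_sphere 0 1).inter_right
    (isClosed_le continuous_const (EuclideanSpace.proj (Fin.last n)).continuous)

theorem geod_le_geod_iff_inner_le_inner {x y x' y' : Euc n} (hx : ‖x‖ = 1) (hy : ‖y‖ = 1)
    (hx' : ‖x'‖ = 1) (hy' : ‖y'‖ = 1) : geod x y ≤ geod x' y' ↔ ⟪x', y'⟫ ≤ ⟪x, y⟫ :=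
  Real.strictAntiOn_arccos.le_iff_ge (real_inner_mem_Icc_of_norm_eq_one hx hy)
    (real_inner_mem_Icc_of_norm_eq_one hx' hy')

theorem inner_map_map_of_surjOn_upperHemi {T : Euc n → Euc n}
    (hmaps : ∀ x ∈ upperHemi n, T x ∈ upperHemi n)
    (hsurj : ∀ y ∈ upperHemi n, ∃ x ∈ upperHemi n, T x = y)
    (hlip : ∀ x ∈ upperHemi n, ∀ y ∈ upperHemi n, geod (T x) (T y) ≤ geod x y) :
    ∀ x ∈ upperHemi n, ∀ y ∈ upperHemi n, ⟪T x, T y⟫ = ⟪x, y⟫ := by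
  have hunit {x : Euc n} (hx : x ∈ upperHemi n) : ‖x‖ = 1 := norm_eq_one_of_mem_upperHemi hx
  have : CompactSpace (upperHemi n) := isCompact_iff_compactSpace.mp isCompact_upperHemi
  set F : upperHemi n → upperHemi n := Set.MapsTo.restrict T _ _ hmaps
  have hF_lip : LipschitzWith 1 F := LipschitzWith.of_dist_le_mul fun x y => by
    rw [NNReal.coe_one, one_mul, Subtype.dist_eq, Subtype.dist_eq]
    have hTx := hunit (hmaps x x.2)
    have hTy := hunit (hmaps y y.2)
    exact (dist_le_dist_iff_inner_le_inner hTx hTy (hunit x.2) (hunit y.2)).mpr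
      ((geod_le_geod_iff_inner_le_inner hTx hTy (hunit x.2) (hunit y.2)).mp (hlip x x.2 y y.2))
  have hF_surj : Surjective F := fun y =>
    let ⟨x, hx, hxy⟩ := hsurj y y.2
    ⟨⟨x, hx⟩, Subtype.ext hxy⟩
  intro x hx y hy
  have hdist := (hF_lip.isometry_of_surjective hF_surj).dist_eq ⟨x, hx⟩ ⟨y, hy⟩
  rw [Subtype.dist_eq, Subtype.dist_eq] at hdist
  exact (dist_eq_dist_iff_inner_eq_inner (hunit (hmaps x hx)) (hunit (hmaps y hy)) (hunit hx)
    (hunit hy)).mp hdist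

theorem inner_northPole (x : Euc n) : ⟪x, northPole n⟫ = x (Fin.last n) := by
  simp [northPole, EuclideanSpace.inner_single_right]

theorem single_mem_upperHemi (k : Fin (n + 1)) :
    EuclideanSpace.single k (1 : ℝ) ∈ upperHemi n := by
  refine ⟨?_, ?_⟩
  · simp [unitSphere]
  · simp only [PiLp.single_apply]
    split_ifs <;> norm_num

theorem single_castSucc_mem_equator (j : Fin n) :
    EuclideanSpace.single j.castSucc (1 : ℝ) ∈ equator n :=
  ⟨single_mem_upperHemi _, by simp [(Fin.castSucc_lt_last j).ne']⟩

theorem northPole_mem_upperHemi : northPole n ∈ upperHemi n := single_mem_upperHemi _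

theorem eq_northPole_of_mem_upperHemi {p : Euc n} (hp : p ∈ upperHemi n)
    (h : ∀ j : Fin n, p j.castSucc = 0) : p = northPole n := by
  have hsq := EuclideanSpace.real_norm_sq_eq p
  simp only [norm_eq_one_of_mem_upperHemi hp, Fin.sum_univ_castSucc, h, one_pow,
    zero_pow two_ne_zero, Finset.sum_const_zero, zero_add] at hsq
  have hlast : p (Fin.last n) = 1 := by nlinarith [hp.2]
  ext k
  rcases Fin.eq_castSucc_or_eq_last k with ⟨j, rfl⟩ | rfl
  · simp [northPole, (Fin.castSucc_lt_last j).ne, h]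
  · simp [northPole, hlast]

theorem map_northPole_eq {T : Euc n → Euc n}
    (hinner : ∀ x ∈ upperHemi n, ∀ y ∈ upperHemi n, ⟪T x, T y⟫ = ⟪x, y⟫)
    (hmaps : ∀ x ∈ upperHemi n, T x ∈ upperHemi n) (hC : equator n ⊆ T '' equator n) :
    T (northPole n) = northPole n := by
  refine eq_northPole_of_mem_upperHemi (hmaps _ northPole_mem_upperHemi) fun j => ?_
  obtain ⟨c, hc, hcj⟩ := hC (single_castSucc_mem_equator j)
  calc T (northPole n) j.castSucc
      = ⟪EuclideanSpace.single j.castSucc 1, T (northPole n)⟫ := by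
        simp [EuclideanSpace.inner_single_left]
    _ = ⟪c, northPole n⟫ := by rw [← hcj, hinner _ hc.1 _ northPole_mem_upperHemi]
    _ = 0 := by rw [inner_northPole]; exact hc.2

theorem map_apply_last {T : Euc n → Euc n}
    (hinner : ∀ x ∈ upperHemi n, ∀ y ∈ upperHemi n, ⟪T x, T y⟫ = ⟪x, y⟫)
    (hN : T (northPole n) = northPole n) {x : Euc n} (hx : x ∈ upperHemi n) :
    T x (Fin.last n) = x (Fin.last n) := by
  rw [← inner_northPole, ← inner_northPole x, ← hinner x hx _ northPole_mem_upperHemi, hN]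

theorem map_eq_sum_smul {T : Euc n → Euc n}
    (hinner : ∀ x ∈ upperHemi n, ∀ y ∈ upperHemi n, ⟪T x, T y⟫ = ⟪x, y⟫)
    {x : Euc n} (hx : x ∈ upperHemi n) : T x = ∑ k, x k • T (EuclideanSpace.single k 1) := by
  have hsum : ∑ k, x k • EuclideanSpace.single k (1 : ℝ) = x := by
    simpa using (EuclideanSpace.basisFun (Fin (n + 1)) ℝ).sum_repr x
  have := map_sum_smul_eq_of_inner_map_map hinner single_mem_upperHemi (fun k => x k)
    (by rwa [hsum])
  rwa [hsum] at this

theorem transpose_mul_self_eq_one_of_orthonormal {u : Fin n → Euc n} (hu : Orthonormal ℝ u)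
    (hlast : ∀ j, u j (Fin.last n) = 0) :
    (Matrix.of fun i j => u j i.castSucc).transpose * Matrix.of (fun i j => u j i.castSucc) =
      1 := by
  ext j k
  have hjk := orthonormal_iff_ite.mp hu j k
  simp only [PiLp.inner_apply, Fin.sum_univ_castSucc, hlast, RCLike.inner_apply, conj_trivial,
    mul_zero, add_zero] at hjk
  simpa [Matrix.mul_apply, Matrix.one_apply, mul_comm] using hjk

end Hemisphere

theorem stmt3_general (n : ℕ) (T : Euc n → Euc n)
    (hT_maps : ∀ x ∈ upperHemi n, T x ∈ upperHemi n)
    (hT_surj : ∀ y ∈ upperHemi n, ∃ x ∈ upperHemi n, T x = y)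
    (hT_lip : ∀ x ∈ upperHemi n, ∀ y ∈ upperHemi n, geod (T x) (T y) ≤ geod x y)
    (hT_eq : T '' equator n = equator n) :
    T (northPole n) = northPole n ∧
    (∃ A : Matrix (Fin n) (Fin n) ℝ, A.transpose * A = 1 ∧
      ∀ x ∈ upperHemi n,
        (∀ i : Fin n, T x i.castSucc = ∑ j : Fin n, A i j * x j.castSucc) ∧
        T x (Fin.last n) = x (Fin.last n)) ∧
    (∀ x ∈ upperHemi n, ∀ y ∈ upperHemi n, geod (T x) (T y) = geod x y) := by
  have hinner := inner_map_map_of_surjOn_upperHemi hT_maps hT_surj hT_lip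
  have hN := map_northPole_eq hinner hT_maps hT_eq.ge
  have hlast (x : Euc n) (hx : x ∈ upperHemi n) := map_apply_last hinner hN hx
  set u : Fin n → Euc n := fun j => T (EuclideanSpace.single j.castSucc 1)
  have hu : Orthonormal ℝ u := by
    refine orthonormal_iff_ite.mpr fun j k => ?_
    rw [hinner _ (single_mem_upperHemi _) _ (single_mem_upperHemi _)]
    simpa using orthonormal_iff_ite.mp
      ((EuclideanSpace.basisFun _ ℝ).orthonormal.comp _ (Fin.castSucc_injective n)) j k
  refine ⟨hN, ⟨Matrix.of fun i j => u j i.castSucc, ?_, fun x hx => ⟨fun i => ?_, hlast x hx⟩⟩,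
    fun x hx y hy => by simp only [geod, hinner x hx y hy]⟩
  · exact transpose_mul_self_eq_one_of_orthonormal hu
      fun j => (hlast _ (single_mem_upperHemi _)).trans (single_castSucc_mem_equator j).2
  · have hN' : T (EuclideanSpace.single (Fin.last n) 1) = northPole n := hN
    rw [map_eq_sum_smul hinner hx]
    simp [Fin.sum_univ_castSucc, hN', northPole, u, mul_comm]

/-- A surjective `1`-Lipschitz map `T : S^n_+ → S^n_+` with `T(C) = C` fixes
the north pole and is induced by an orthogonal matrix acting on the first `n` coordinates;
in particular it is an isometry of `S^n_+`. -/
theorem stmt3 (n : ℕ) (hn : 2 ≤ n) (T : Euc n → Euc n)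
    (hT_maps : ∀ x ∈ upperHemi n, T x ∈ upperHemi n)
    (hT_surj : ∀ y ∈ upperHemi n, ∃ x ∈ upperHemi n, T x = y)
    (hT_lip : ∀ x ∈ upperHemi n, ∀ y ∈ upperHemi n, geod (T x) (T y) ≤ geod x y)
    (hT_eq : T '' equator n = equator n) :
    T (northPole n) = northPole n ∧
    (∃ A : Matrix (Fin n) (Fin n) ℝ, A.transpose * A = 1 ∧
      ∀ x ∈ upperHemi n,
        (∀ i : Fin n, T x i.castSucc = ∑ j : Fin n, A i j * x j.castSucc) ∧
        T x (Fin.last n) = x (Fin.last n)) ∧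
    (∀ x ∈ upperHemi n, ∀ y ∈ upperHemi n, geod (T x) (T y) = geod x y) :=
  stmt3_general n T hT_maps hT_surj hT_lip hT_eq

end
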